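/- Let (E,ℒ,𝒜) be a weakly left-resolving, normal labelled space, and let α ∈ ℒ^{≥1} and β ∈ ℒ^{≤∞} be such that αβ ∈ ℒ^{≤∞}. Then the gluing map G_{(α)β} : T^{(α)β} → T^{αβ} is a bijection whose inverse is the cutting map H_{[α]β} : T^{αβ} → T^{(α)β}. -/

import Mathlib

open Classical

universe u v w

/-! ## Words over an alphabet -/

/-- Finite-or-infinite words over the alphabet `A`: `Sum.inl l` is the finite word `l`
(with `[]` playing the role of the empty word `ω`), and `Sum.inr f` is the infinite word `f`. -/
abbrev Word (A : Type w) := List A ⊕ (ℕ → A)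

/-- The length `|α| ∈ ℕ∞` of a word. -/
def wlength {A : Type w} : Word A → ℕ∞ :=
  Sum.elim (fun l => (l.length : ℕ∞)) fun _ => ⊤

/-- The finite prefix `α_{1,n}` of a word `α`. -/
def wprefix {A : Type w} : Word A → ℕ → List A :=
  Sum.elim (fun l n => l.take n) fun f n => List.ofFn fun i : Fin n => f i

/-- Concatenation `αβ` of a finite word `α` with a word `β`. -/
def wappend {A : Type w} (α : List A) : Word A → Word A :=
  Sum.elim (fun l => Sum.inl (α ++ l)) fun f =>
    Sum.inr fun n => if h : n < α.length then α.get ⟨n, h⟩ else f (n - α.length)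

/-- `β` is a beginning (finite prefix) of the word `α`. -/
def WPrefix {A : Type w} (β : List A) : Word A → Prop :=
  Sum.elim (fun l => β <+: l) fun f => β = List.ofFn fun i : Fin β.length => f i

/-! ## Triples -/

/-- Formal triples `(α, X, β)` together with a zero element; the inverse semigroup `S`
of a labelled space consists of such elements. -/
inductive Tr (V : Type u) (A : Type w) where
  | zero : Tr V A
  | mk : List A → Set V → List A → Tr V A

/-- The involution `(α,A,β)* = (β,A,α)` (fixing `0`). -/
def Tr.tstar {V : Type u} {A : Type w} : Tr V A → Tr V A
  | .zero => .zero
  | .mk α X β => .mk β X α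

/-! ## Labelled spaces -/

/-- The data of a labelled space `(E, ℒ, 𝒜)`: a directed graph on nonempty vertex/edge
sets, a surjective labelling map onto the alphabet `A`, and a family `𝒜` of subsets
of the vertex set. -/
structure LblSp (V : Type u) (E : Type v) (A : Type w) where
  src : E → V
  rng : E → V
  lab : E → A
  lab_surj : Function.Surjective lab
  nonempty_V : Nonempty V
  nonempty_E : Nonempty E
  𝒜 : Set (Set V)

namespace LblSp

variable {V : Type u} {Ed : Type v} {A : Type w} (Λ : LblSp V Ed A)

/-- `α ≠ ω` is the label of some finite path of the graph. -/
def IsPathLabel (α : List A) : Prop :=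
  ∃ l : List Ed, l ≠ [] ∧ List.Chain' (fun e f => Λ.rng e = Λ.src f) l ∧ l.map Λ.lab = α

/-- `ℒ^*`: the finite labelled paths, together with the empty word. -/
def LStar : Set (List A) := {α | α = [] ∨ Λ.IsPathLabel α}

/-- `ℒ^∞`: the infinite labelled paths. -/
def LInfty : Set (ℕ → A) :=
  {f | ∃ e : ℕ → Ed, (∀ n, Λ.rng (e n) = Λ.src (e (n + 1))) ∧ ∀ n, Λ.lab (e n) = f n}

/-- `ℒ^{≤∞} = ℒ^* ∪ ℒ^∞`, as a predicate on `Word A`. -/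
def IsWordW : Word A → Prop := Sum.elim (· ∈ Λ.LStar) (· ∈ Λ.LInfty)

/-- The relative range `r(X, α)` (with `r(X, ω) = X`). -/
noncomputable def relRange (X : Set V) (α : List A) : Set V :=
  if α = [] then X
  else {v | ∃ (l : List Ed) (h : l ≠ []), List.Chain' (fun e f => Λ.rng e = Λ.src f) l ∧
        l.map Λ.lab = α ∧ Λ.src (l.head h) ∈ X ∧ Λ.rng (l.getLast h) = v}

/-- The range `r(α) = r(E⁰, α)`. -/
noncomputable def rangeL (α : List A) : Set V := Λ.relRange Set.univ α

/-- `𝒜^α = {X ∈ 𝒜 : X ⊆ r(α)}`. -/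
noncomputable def Aset (α : List A) : Set (Set V) := {X | X ∈ Λ.𝒜 ∧ X ⊆ Λ.rangeL α}

/-- `(E, ℒ, 𝒜)` is a labelled space: `𝒜` is closed under finite intersections and
unions, contains all ranges `r(α)` for `α ∈ ℒ^{≥1}`, and is closed under relative ranges. -/
structure IsLS : Prop where
  inter_mem : ∀ X ∈ Λ.𝒜, ∀ Y ∈ Λ.𝒜, X ∩ Y ∈ Λ.𝒜
  union_mem : ∀ X ∈ Λ.𝒜, ∀ Y ∈ Λ.𝒜, X ∪ Y ∈ Λ.𝒜
  range_mem : ∀ α ∈ Λ.LStar, α ≠ [] → Λ.rangeL α ∈ Λ.𝒜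
  relRange_mem : ∀ X ∈ Λ.𝒜, ∀ α ∈ Λ.LStar, Λ.relRange X α ∈ Λ.𝒜

/-- A weakly left-resolving labelled space. -/
structure IsWLR : Prop where
  toIsLS : Λ.IsLS
  wlr : ∀ X ∈ Λ.𝒜, ∀ Y ∈ Λ.𝒜, ∀ α ∈ Λ.LStar, α ≠ [] →
    Λ.relRange (X ∩ Y) α = Λ.relRange X α ∩ Λ.relRange Y α

/-- A weakly left-resolving normal labelled space. -/
structure IsNormal : Prop where
  toIsWLR : Λ.IsWLR
  sdiff_mem : ∀ X ∈ Λ.𝒜, ∀ Y ∈ Λ.𝒜, X \ Y ∈ Λ.𝒜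

/-! ## The inverse semigroup `S` -/

/-- The underlying set of the inverse semigroup
`S = {(α,A,β) : α, β ∈ ℒ^*, A ∈ 𝒜^α ∩ 𝒜^β, A ≠ ∅} ∪ {0}`. -/
def SSet : Set (Tr V A) :=
  {t | t = Tr.zero ∨ ∃ α X β, t = Tr.mk α X β ∧ α ∈ Λ.LStar ∧ β ∈ Λ.LStar ∧
    X ∈ Λ.Aset α ∧ X ∈ Λ.Aset β ∧ X.Nonempty}

/-- The semilattice of idempotents `E(S) = {(α,A,α)} ∪ {0}`. -/
def ESet : Set (Tr V A) :=
  {t | t = Tr.zero ∨ ∃ α X, t = Tr.mk α X α ∧ α ∈ Λ.LStar ∧ X ∈ Λ.Aset α ∧ X.Nonempty}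

/-- The product of `S`. -/
noncomputable def tmul : Tr V A → Tr V A → Tr V A
  | Tr.zero, _ => Tr.zero
  | Tr.mk _ _ _, Tr.zero => Tr.zero
  | Tr.mk α X β, Tr.mk γ Y δ =>
    if β <+: γ ∧ (Λ.relRange X (γ.drop β.length) ∩ Y).Nonempty then
      Tr.mk (α ++ γ.drop β.length) (Λ.relRange X (γ.drop β.length) ∩ Y) δ
    else if γ <+: β ∧ (X ∩ Λ.relRange Y (β.drop γ.length)).Nonempty then
      Tr.mk α (X ∩ Λ.relRange Y (β.drop γ.length)) (δ ++ β.drop γ.length)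
    else Tr.zero

/-! ## Filters in `E(S)`, characters, and the tight spectrum -/

/-- A filter in `E(S)`: a nonempty subset of `E(S) ∖ {0}` closed under products and
upward closed in the natural order (`p ≤ q ↔ pq = p`). -/
def IsFilterES (ξ : Set (Tr V A)) : Prop :=
  ξ.Nonempty ∧ (∀ t ∈ ξ, t ∈ Λ.ESet ∧ t ≠ Tr.zero) ∧
  (∀ p ∈ ξ, ∀ q ∈ ξ, Λ.tmul p q ∈ ξ) ∧
  (∀ p ∈ ξ, ∀ q ∈ Λ.ESet, Λ.tmul p q = p → q ∈ ξ)

/-- An ultrafilter in `E(S)`. -/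
def IsUltraES (ξ : Set (Tr V A)) : Prop :=
  Λ.IsFilterES ξ ∧ ∀ ζ, Λ.IsFilterES ζ → ξ ⊆ ζ → ξ = ζ

/-- The character (indicator function) of a filter. -/
noncomputable def charOf (_Λ : LblSp V Ed A) (ξ : Set (Tr V A)) : Tr V A → Bool :=
  fun t => if t ∈ ξ then true else false

/-- A character of `E(S)`: a nonzero, zero- and meet-preserving `{0,1}`-valued map on
`E(S)` (encoded as a map on triples vanishing outside `E(S)`). -/
def IsChar (φ : Tr V A → Bool) : Prop :=
  (∃ e, φ e = true) ∧ (∀ e, e ∉ Λ.ESet → φ e = false) ∧ φ Tr.zero = false ∧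
  ∀ e ∈ Λ.ESet, ∀ f ∈ Λ.ESet, φ (Λ.tmul e f) = (φ e && φ f)

/-- The tight spectrum `Ê_tight`: the closure, within the space of characters with the
topology of pointwise convergence, of the set of characters of ultrafilters. -/
def tightSpectrum : Set (Tr V A → Bool) :=
  {φ | Λ.IsChar φ} ∩ closure {φ | ∃ ξ, Λ.IsUltraES ξ ∧ φ = Λ.charOf ξ}

/-- A tight filter: a filter whose character lies in the tight spectrum. -/
def IsTightFilter (ξ : Set (Tr V A)) : Prop :=
  Λ.IsFilterES ξ ∧ Λ.charOf ξ ∈ Λ.tightSpectrum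

/-- `ξ_{|β|} = {B : (β, B, β) ∈ ξ}`, the filter of `ξ` at level `β`. -/
def filterAt (_Λ : LblSp V Ed A) (ξ : Set (Tr V A)) (β : List A) : Set (Set V) :=
  {B | Tr.mk β B β ∈ ξ}

/-- `α` is the word associated with the filter `ξ` (i.e. `ξ = ξ^α`): the nonempty finite
beginnings of `α` are exactly the words appearing in elements of `ξ`. -/
def HasWord (_Λ : LblSp V Ed A) (ξ : Set (Tr V A)) (α : Word A) : Prop :=
  ∀ β : List A, β ≠ [] → ((∃ B, Tr.mk β B β ∈ ξ) ↔ WPrefix β α)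

/-! ## Filters and ultrafilters in `𝒜^β` -/

/-- A filter in the Boolean algebra `𝒜^β`. -/
def IsFilterAset (β : List A) (F : Set (Set V)) : Prop :=
  F.Nonempty ∧ F ⊆ Λ.Aset β ∧ (∀ X ∈ F, X.Nonempty) ∧
  (∀ X ∈ F, ∀ Y ∈ F, X ∩ Y ∈ F) ∧ (∀ X ∈ F, ∀ Y ∈ Λ.Aset β, X ⊆ Y → Y ∈ F)

/-- An ultrafilter in `𝒜^β` (an element of `X_β`). -/
def IsUltraAset (β : List A) (F : Set (Set V)) : Prop :=
  Λ.IsFilterAset β F ∧ ∀ G, Λ.IsFilterAset β G → F ⊆ G → F = G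

/-- The gluing map `g_{(α)β}(F) = {C ∩ r(αβ) : C ∈ F}` on ultrafilters. -/
noncomputable def gmap (α β : List A) (F : Set (Set V)) : Set (Set V) :=
  {X | ∃ C ∈ F, X = C ∩ Λ.rangeL (α ++ β)}

/-- The cutting map `h_{[α]β}(F) = {C ∈ 𝒜^β : D ⊆ C for some D ∈ F}` on ultrafilters. -/
noncomputable def hmap (α β : List A) (F : Set (Set V)) : Set (Set V) :=
  {C | C ∈ Λ.Aset β ∧ ∃ D ∈ F, D ⊆ C}

/-! ## Cutting and gluing of (tight) filters in `E(S)` -/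

/-- The cutting map `H_{[α]β} : T^{αβ} → T^{(α)β}` (word-free formulation): the filter
whose family is `η_n = h_{[α]β_{1,n}}(ξ_{n+|α|})`; `H_{[ω]β}` is the identity. -/
noncomputable def Hcut (α : List A) (ξ : Set (Tr V A)) : Set (Tr V A) :=
  if α = [] then ξ
  else {t | ∃ δ B, t = Tr.mk δ B δ ∧ B ∈ Λ.Aset δ ∧
        ∃ D, Tr.mk (α ++ δ) D (α ++ δ) ∈ ξ ∧ D ⊆ B}

/-- The gluing map `G_{(α)β} : T^{(α)β} → T^{αβ}` (word-free formulation): the filter with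
family `η_{|α|+n} = g_{(α)β_{1,n}}(ξ_n)` for `n ≥ 1` and `η_i = f_{α_{1,i}[…]}(…)` for
`i ≤ |α|`, with the two cases according to whether the word of `ξ` is empty (`β = ω`)
or not; `G_{(ω)β}` is the identity. -/
noncomputable def Gglue (α : List A) (ξ : Set (Tr V A)) : Set (Tr V A) :=
  if α = [] then ξ
  else if ∃ (δ : List A) (B : Set V), δ ≠ [] ∧ Tr.mk δ B δ ∈ ξ then
    {t | ∃ δ B, t = Tr.mk δ B δ ∧
      ((α <+: δ ∧ α ≠ δ ∧ ∃ C, Tr.mk (δ.drop α.length) C (δ.drop α.length) ∈ ξ ∧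
          B = C ∩ Λ.rangeL δ) ∨
       (δ <+: α ∧ B ∈ Λ.Aset δ ∧ ∃ (b : A) (C : Set V), Tr.mk [b] C [b] ∈ ξ ∧
          Λ.relRange B (α.drop δ.length ++ [b]) = C ∩ Λ.rangeL (α ++ [b])))}
  else
    {t | ∃ δ B, t = Tr.mk δ B δ ∧ δ <+: α ∧ B ∈ Λ.Aset δ ∧
      ∃ C, Tr.mk [] C [] ∈ ξ ∧ Λ.relRange B (α.drop δ.length) = C ∩ Λ.rangeL α}

/-- `T^β`: the set of tight filters with associated word `β`. -/
def TWord (β : Word A) : Set (Set (Tr V A)) :=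
  {ξ | Λ.IsTightFilter ξ ∧ Λ.HasWord ξ β}

/-- `T^{(α)β} = {ξ ∈ T^β : r(α) ∈ ξ_0}` (equal to `T^β` when `α = ω`), the domain of the
gluing map `G_{(α)β}`. -/
def TGlueDom (α : List A) (β : Word A) : Set (Set (Tr V A)) :=
  {ξ | Λ.IsTightFilter ξ ∧ Λ.HasWord ξ β ∧ (α ≠ [] → Tr.mk [] (Λ.rangeL α) [] ∈ ξ)}

/-! ## The groupoid `Γ` -/

/-- The defining relation of
`Γ = {(ξ^{aγ}, |a|-|b|, η^{bγ}) ∈ T × ℤ × T : H_{[a]γ}(ξ^{aγ}) = H_{[b]γ}(η^{bγ})}`. -/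
def InGamma (η : Set (Tr V A)) (m : ℤ) (ξ : Set (Tr V A)) : Prop :=
  ∃ (a b : List A) (γ : Word A), a ∈ Λ.LStar ∧ b ∈ Λ.LStar ∧ Λ.IsWordW γ ∧
    η ∈ Λ.TWord (wappend a γ) ∧ ξ ∈ Λ.TWord (wappend b γ) ∧
    m = (a.length : ℤ) - (b.length : ℤ) ∧ Λ.Hcut a η = Λ.Hcut b ξ

/-- `Γ` as a set of raw triples. -/
def GammaRaw : Set (Set (Tr V A) × ℤ × Set (Tr V A)) :=
  {p | Λ.InGamma p.1 p.2.1 p.2.2}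

/-- The basic set `Z_{s,e:e₁,…,eₙ}` of `Γ` (raw version), for `s = (μ, X, ν)`:
triples `(η^{μγ}, |μ|-|ν|, ξ^{νγ}) ∈ Γ` with `e ∈ ξ`, `eᵢ ∉ ξ` and
`H_{[μ]γ}(η) = H_{[ν]γ}(ξ)`. -/
noncomputable def ZrawGen (μ ν : List A) (e : Tr V A) (es : List (Tr V A)) :
    Set (Set (Tr V A) × ℤ × Set (Tr V A)) :=
  {p | Λ.InGamma p.1 p.2.1 p.2.2 ∧ p.2.1 = (μ.length : ℤ) - (ν.length : ℤ) ∧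
       e ∈ p.2.2 ∧ (∀ f ∈ es, f ∉ p.2.2) ∧
       ∃ γ : Word A, Λ.HasWord p.1 (wappend μ γ) ∧ Λ.HasWord p.2.2 (wappend ν γ) ∧
         Λ.Hcut μ p.1 = Λ.Hcut ν p.2.2}

/-- `Z_s = Z_{s, s*s}` for `s = (μ, X, ν)` (raw version). -/
noncomputable def Zraw (μ : List A) (X : Set V) (ν : List A) :
    Set (Set (Tr V A) × ℤ × Set (Tr V A)) :=
  Λ.ZrawGen μ ν (Tr.mk ν X ν) []

/-- The basic set `V_{e:e₁,…,eₙ} = U_{e:e₁,…,eₙ} ∩ T` of the tight filter space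
(raw version). -/
def VrawGen (e : Tr V A) (es : List (Tr V A)) : Set (Set (Tr V A)) :=
  {ξ | Λ.IsTightFilter ξ ∧ e ∈ ξ ∧ ∀ f ∈ es, f ∉ ξ}

/-- The shift map `σ : T^{(1)} → T`, `σ(ξ^{aγ}) = H_{[a]γ}(ξ^{aγ})` (extended by the
identity off its domain). -/
noncomputable def sigmaMap (ξ : Set (Tr V A)) : Set (Tr V A) :=
  if h : ∃ a : A, ∃ B : Set V, Tr.mk [a] B [a] ∈ ξ then Λ.Hcut [h.choose] ξ else ξ

/-- The Renault–Deaconu basic set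
`𝒱(X, Y, m, n) = {(η, m-n, ξ) ∈ Γ : (η, ξ) ∈ X × Y, σ^m(η) = σ^n(ξ)}` (raw version). -/
noncomputable def VrdRaw (Xs Ys : Set (Set (Tr V A))) (m n : ℕ) :
    Set (Set (Tr V A) × ℤ × Set (Tr V A)) :=
  {p | Λ.InGamma p.1 p.2.1 p.2.2 ∧ p.2.1 = (m : ℤ) - (n : ℤ) ∧
       p.1 ∈ Xs ∧ p.2.2 ∈ Ys ∧ (Λ.sigmaMap)^[m] p.1 = (Λ.sigmaMap)^[n] p.2.2}

/-! ## The groupoid of germs `𝒢_tight` -/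

/-- The action `θ_s(φ)(e) = φ(s* e s)` of `S` on characters. -/
noncomputable def theta (s : Tr V A) (φ : Tr V A → Bool) : Tr V A → Bool :=
  fun e => if e ∈ Λ.ESet then φ (Λ.tmul (Λ.tmul (Tr.tstar s) e) s) else false

/-- `Ω = {(s, φ) ∈ S × Ê_tight : φ ∈ D_{s*s}}`. -/
noncomputable def Omega : Set (Tr V A × (Tr V A → Bool)) :=
  {p | p.1 ∈ Λ.SSet ∧ p.2 ∈ Λ.tightSpectrum ∧ p.2 (Λ.tmul (Tr.tstar p.1) p.1) = true}

/-- The germ equivalence relation on `Ω`: `(s,φ) ∼ (t,ψ)` iff `φ = ψ` and there is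
`e ∈ E(S)` with `φ(e) = 1` and `se = te`. -/
noncomputable def germEquiv (p q : Tr V A × (Tr V A → Bool)) : Prop :=
  p.2 = q.2 ∧ ∃ e ∈ Λ.ESet, p.2 e = true ∧ Λ.tmul p.1 e = Λ.tmul q.1 e

/-- The map `Φ` at the level of `Ω`: for `t = (β, X, γ)` and `φ` with filter `ξ^α`
(where `α = γα'`), `Φ[t,φ] = ((G_{(β)α'} ∘ H_{[γ]α'})(ξ^α), |β|-|γ|, ξ^α)`. -/
noncomputable def PhiRaw : Tr V A → (Tr V A → Bool) → Set (Tr V A) × ℤ × Set (Tr V A)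
  | Tr.zero, _ => (∅, 0, ∅)
  | Tr.mk β _ γ, φ =>
      (Λ.Gglue β (Λ.Hcut γ {e | φ e = true}), (β.length : ℤ) - (γ.length : ℤ),
        {e | φ e = true})

/-! ## Miscellaneous notions -/

/-- `ℒ(XE¹) = {ℒ(e) : e ∈ E¹, s(e) ∈ X}`. -/
def labE (X : Set V) : Set A := {a | ∃ e, Λ.lab e = a ∧ Λ.src e ∈ X}

/-- The set `E⁰_sink` of sinks. -/
def sinks : Set V := {v | ∀ e, Λ.src e ≠ v}

/-- The filter in `E(S)` associated with a pair (word, complete family). -/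
def pairFilter (_Λ : LblSp V Ed A) (α : Word A) (F : ℕ → Set (Set V)) : Set (Tr V A) :=
  {t | ∃ (n : ℕ) (B : Set V), (n : ℕ∞) ≤ wlength α ∧ B ∈ F n ∧
    t = Tr.mk (wprefix α n) B (wprefix α n)}

/-- A complete family for the word `α`: `F n` is a filter in `𝒜^{α_{1,n}}` for
`1 ≤ n ≤ |α|` (`F 0` is a filter in `𝒜` or empty, and a filter if `α = ω`), and
`F n = {X ∈ 𝒜^{α_{1,n}} : r(X, α_{n+1}) ∈ F (n+1)}` for all `n < |α|`. -/
noncomputable def IsCompleteFamily (α : Word A) (F : ℕ → Set (Set V)) : Prop :=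
  Λ.IsWordW α ∧
  (∀ n : ℕ, 1 ≤ n → (n : ℕ∞) ≤ wlength α → Λ.IsFilterAset (wprefix α n) (F n)) ∧
  (F 0 = ∅ ∨ Λ.IsFilterAset [] (F 0)) ∧
  (wlength α = 0 → Λ.IsFilterAset [] (F 0)) ∧
  (∀ n : ℕ, ((n + 1 : ℕ) : ℕ∞) ≤ wlength α →
    F n = {X | X ∈ Λ.Aset (wprefix α n) ∧
      Λ.relRange X ((wprefix α (n + 1)).drop n) ∈ F (n + 1)})

/-! ## The tight filter space `T` and the groupoid `Γ` as types -/

/-- The space `T` of tight filters. -/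
structure TightT where
  carrier : Set (Tr V A)
  tight : Λ.IsTightFilter carrier

/-- The topology of `T`, induced from pointwise convergence of characters. -/
noncomputable instance : TopologicalSpace Λ.TightT :=
  TopologicalSpace.induced (fun ξ => Λ.charOf ξ.carrier) inferInstance

/-- The groupoid `Γ ⊆ T × ℤ × T` as a type. -/
structure GammaT where
  fst : Λ.TightT
  mid : ℤ
  lst : Λ.TightT
  mem : Λ.InGamma fst.carrier mid lst.carrier

/-- The raw triple underlying an element of `Γ`. -/
def rawOf (p : Λ.GammaT) : Set (Tr V A) × ℤ × Set (Tr V A) :=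
  (p.fst.carrier, p.mid, p.lst.carrier)

/-- The collection of all sets `Z_{s,e:e₁,…,eₙ}` (for `s ∈ S`, `e, eᵢ ∈ E(S)`),
as subsets of `Γ`. -/
noncomputable def ZBasisT : Set (Set Λ.GammaT) :=
  {Z | ∃ (μ : List A) (X : Set V) (ν : List A) (e : Tr V A) (es : List (Tr V A)),
    Tr.mk μ X ν ∈ Λ.SSet ∧ e ∈ Λ.ESet ∧ (∀ f ∈ es, f ∈ Λ.ESet) ∧
    Z = {p : Λ.GammaT | Λ.rawOf p ∈ Λ.ZrawGen μ ν e es}}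

/-- The topology on `Γ` induced by the isomorphism `Φ` from the germ topology of
`𝒢_tight`, generated by the images of the basic sets `Θ(s, 𝒰)` with `𝒰 ⊆ D_{s*s}`
open in the tight spectrum. -/
noncomputable def PhiTopology : TopologicalSpace Λ.GammaT :=
  TopologicalSpace.generateFrom
    {Z | ∃ (s : Tr V A) (U : Set (Tr V A → Bool)), s ∈ Λ.SSet ∧
      (∃ W, IsOpen W ∧ U = W ∩ Λ.tightSpectrum) ∧
      (∀ φ ∈ U, φ (Λ.tmul (Tr.tstar s) s) = true) ∧
      Z = {p : Λ.GammaT | ∃ φ ∈ U, (s, φ) ∈ Λ.Omega ∧ Λ.PhiRaw s φ = Λ.rawOf p}}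

end LblSp

open List

/-!
Cutting at `α` reads level `δ` of `H ξ` off level `αδ` of `ξ`, and gluing reads level `δ` of
`G ξ` (for `δ` comparable with `α`) off level `δ.drop |α|` of `ξ`, applied to the relative range
`r(B, α.drop |δ|)`. Weak left-resolvingness (`r(X ∩ Y, σ) = r(X, σ) ∩ r(Y, σ)`) makes both
descriptions closed under the filter operations, and composing them returns the original filter.
So `G` and `H` are mutually inverse monotone maps between the filters containing `(ω, r(α), ω)`
and the filters with an element at level `α`, hence they preserve ultrafilters. Finally, membership
of an element in `G ξ` or `H ξ` depends on the membership of a single element in `ξ`, so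
approximability by ultrafilters on finite sets, i.e. tightness, is preserved too.
-/

namespace LblSp

variable {V : Type u} {Ed : Type v} {A : Type w}

/-! ### Words -/

lemma append_drop_eq_append_drop {α δ : List A} (h : δ <+: α ∨ α <+: δ) :
    α ++ δ.drop α.length = δ ++ α.drop δ.length := by
  rcases h with ⟨ρ, rfl⟩ | ⟨ρ, rfl⟩ <;> simp

lemma exists_drop_append_eq {α δ σ : List A} (h₁ : δ <+: α ∨ α <+: δ)
    (h₂ : δ ++ σ <+: α ∨ α <+: δ ++ σ) : ∃ τ, (δ ++ σ).drop α.length = δ.drop α.length ++ τ ∧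
      α.drop δ.length ++ τ = σ ++ α.drop (δ ++ σ).length := by
  by_cases hαδ : α <+: δ
  · obtain ⟨ρ, rfl⟩ := hαδ
    exact ⟨σ, by simp [drop_eq_nil_of_le]⟩
  obtain ⟨ρ, rfl⟩ := h₁.resolve_right hαδ
  rcases h₂ with ⟨κ, hκ⟩ | ⟨κ, hκ⟩
  · obtain rfl : ρ = σ ++ κ := by simpa using hκ.symm
    exact ⟨[], by simp [drop_eq_nil_of_le]⟩
  · obtain rfl : σ = ρ ++ κ := by simpa using hκ.symm
    exact ⟨κ, by simp⟩

lemma prefix_or_prefix_of_drop {α δ ε : List A} (hδ : δ <+: α ∨ α <+: δ)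
    (hε : ε <+: α ∨ α <+: ε)
    (h : δ.drop α.length <+: ε.drop α.length ∨ ε.drop α.length <+: δ.drop α.length) :
    δ <+: ε ∨ ε <+: δ := by
  rcases hδ with hδ | ⟨δ', rfl⟩
  · rcases hε with hε | hε
    · exact prefix_or_prefix_of_prefix hδ hε
    · exact Or.inl (hδ.trans hε)
  rcases hε with hε | ⟨ε', rfl⟩
  · exact Or.inr (hε.trans (prefix_append α δ'))
  · simpa using h

lemma prefix_append_iff {γ α l : List A} :
    γ <+: α ++ l ↔ γ <+: α ∨ (α <+: γ ∧ γ.drop α.length <+: l) := by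
  constructor
  · intro h
    refine (prefix_or_prefix_of_prefix h (prefix_append α l)).imp_right fun hαγ => ⟨hαγ, ?_⟩
    rwa [← prefix_iff_eq_append.mp hαγ, prefix_append_right_inj] at h
  · rintro (h | ⟨hαγ, h⟩)
    · exact h.trans (prefix_append α l)
    · rw [← prefix_iff_eq_append.mp hαγ]
      exact (prefix_append_right_inj α).mpr h

lemma wprefix_inr_iff {γ : List A} {g : ℕ → A} {n : ℕ} (hn : γ.length ≤ n) :
    WPrefix γ (Sum.inr g) ↔ γ <+: List.ofFn (fun i : Fin n => g i) := by
  obtain ⟨m, rfl⟩ := Nat.exists_eq_add_of_le hn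
  rw [WPrefix, Sum.elim_inr, ofFn_add]
  simp only [Fin.val_castLE, Fin.val_natAdd]
  constructor
  · intro h
    nth_rw 1 [h]
    exact prefix_append _ _
  · intro h
    exact (prefix_iff_eq_take.mp h).trans (take_left' (length_ofFn ..))

lemma ofFn_wappend (α : List A) (f : ℕ → A) (n : ℕ) :
    (List.ofFn fun i : Fin (α.length + n) =>
      if h : (i : ℕ) < α.length then α.get ⟨i, h⟩ else f (i - α.length)) =
      α ++ List.ofFn fun i : Fin n => f i := by
  rw [ofFn_add]
  congr 1 <;> simp

lemma wprefix_wappend_iff {α γ : List A} {β : Word A} :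
    WPrefix γ (wappend α β) ↔ γ <+: α ∨ (α <+: γ ∧ WPrefix (γ.drop α.length) β) := by
  rcases β with l | f
  · exact prefix_append_iff
  · rw [wappend, Sum.elim_inr, wprefix_inr_iff (n := α.length + γ.length) (by omega),
      ofFn_wappend, prefix_append_iff, wprefix_inr_iff (n := γ.length) (by simp)]

variable (Λ : LblSp V Ed A)

/-! ### Relative ranges and labelled paths -/

@[simp] lemma relRange_nil (X : Set V) : Λ.relRange X [] = X := if_pos rfl

@[simp] lemma rangeL_nil : Λ.rangeL ([] : List A) = Set.univ := Λ.relRange_nil _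

lemma mem_relRange {σ : List A} (hσ : σ ≠ []) {X : Set V} {v : V} :
    v ∈ Λ.relRange X σ ↔ ∃ (l : List Ed) (h : l ≠ []),
      l.IsChain (fun e f => Λ.rng e = Λ.src f) ∧ l.map Λ.lab = σ ∧
      Λ.src (l.head h) ∈ X ∧ Λ.rng (l.getLast h) = v := by
  rw [relRange, if_neg hσ]; rfl

lemma relRange_mono {X Y : Set V} (h : X ⊆ Y) (σ : List A) :
    Λ.relRange X σ ⊆ Λ.relRange Y σ := by
  rcases eq_or_ne σ [] with rfl | hσ
  · simpa using h
  · intro v hv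
    obtain ⟨l, hl, hch, hmap, hsrc, hrng⟩ := (Λ.mem_relRange hσ).mp hv
    exact (Λ.mem_relRange hσ).mpr ⟨l, hl, hch, hmap, h hsrc, hrng⟩

lemma relRange_append (X : Set V) (σ τ : List A) :
    Λ.relRange X (σ ++ τ) = Λ.relRange (Λ.relRange X σ) τ := by
  rcases eq_or_ne σ [] with rfl | hσ
  · simp
  rcases eq_or_ne τ [] with rfl | hτ
  · simp
  ext v
  rw [Λ.mem_relRange (append_ne_nil_of_left_ne_nil hσ τ), Λ.mem_relRange hτ]
  constructor
  · rintro ⟨l, hl, hch, hmap, hsrc, rfl⟩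
    obtain ⟨l₁, l₂, rfl, rfl, rfl⟩ := map_eq_append_iff.mp hmap
    have hl₁ : l₁ ≠ [] := by rintro rfl; exact hσ rfl
    have hl₂ : l₂ ≠ [] := by rintro rfl; exact hτ rfl
    obtain ⟨hch₁, hch₂, hjoin⟩ := isChain_append.mp hch
    refine ⟨l₂, hl₂, hch₂, rfl, (Λ.mem_relRange hσ).mpr ⟨l₁, hl₁, hch₁, rfl, ?_, ?_⟩, ?_⟩
    · rwa [head_append_of_ne_nil hl₁] at hsrc
    · exact hjoin _ (getLast?_eq_some_getLast hl₁) _ (head?_eq_some_head hl₂)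
    · rw [getLast_append_right hl₂]
  · rintro ⟨l₂, hl₂, hch₂, rfl, hsrc₂, rfl⟩
    obtain ⟨l₁, hl₁, hch₁, rfl, hsrc₁, hjoin⟩ := (Λ.mem_relRange hσ).mp hsrc₂
    refine ⟨l₁ ++ l₂, append_ne_nil_of_left_ne_nil hl₁ l₂, ?_, map_append .., ?_, ?_⟩
    · refine isChain_append.mpr ⟨hch₁, hch₂, ?_⟩
      rintro x hx y hy
      rw [getLast?_eq_some_getLast hl₁, Option.mem_some_iff] at hx
      rw [head?_eq_some_head hl₂, Option.mem_some_iff] at hy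
      rw [← hx, ← hy, hjoin]
    · rwa [head_append_of_ne_nil hl₁]
    · rw [getLast_append_right hl₂]

lemma relRange_subset_rangeL (X : Set V) (σ : List A) :
    Λ.relRange X σ ⊆ Λ.rangeL σ := Λ.relRange_mono (Set.subset_univ X) σ

lemma rangeL_append (σ τ : List A) :
    Λ.rangeL (σ ++ τ) = Λ.relRange (Λ.rangeL σ) τ := Λ.relRange_append _ σ τ

lemma rangeL_append_subset (σ τ : List A) : Λ.rangeL (σ ++ τ) ⊆ Λ.rangeL τ := by
  rw [Λ.rangeL_append]; exact Λ.relRange_subset_rangeL _ τ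

lemma nonempty_of_relRange_nonempty {X : Set V} {σ : List A}
    (h : (Λ.relRange X σ).Nonempty) : X.Nonempty := by
  rcases eq_or_ne σ [] with rfl | hσ
  · simpa using h
  · obtain ⟨v, hv⟩ := h
    obtain ⟨l, hl, -, -, hsrc, -⟩ := (Λ.mem_relRange hσ).mp hv
    exact ⟨_, hsrc⟩

lemma relRange_drop_subset_rangeL {δ α : List A} (h : δ <+: α ∨ α <+: δ) {B : Set V}
    (hB : B ⊆ Λ.rangeL δ) :
    Λ.relRange B (α.drop δ.length) ⊆ Λ.rangeL (α ++ δ.drop α.length) := by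
  rw [append_drop_eq_append_drop h, rangeL_append]
  exact Λ.relRange_mono hB _

lemma relRange_drop_subset_rangeL_of_prefix {δ α : List A} (h : δ <+: α) {B : Set V}
    (hB : B ⊆ Λ.rangeL δ) : Λ.relRange B (α.drop δ.length) ⊆ Λ.rangeL α := by
  simpa [drop_eq_nil_of_le h.length_le] using Λ.relRange_drop_subset_rangeL (Or.inl h) hB

lemma nil_mem_LStar : ([] : List A) ∈ Λ.LStar := Or.inl rfl

lemma mem_LStar_of_rangeL_nonempty {σ : List A} (h : (Λ.rangeL σ).Nonempty) :
    σ ∈ Λ.LStar := by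
  rcases eq_or_ne σ [] with rfl | hσ
  · exact Λ.nil_mem_LStar
  · obtain ⟨v, hv⟩ := h
    obtain ⟨l, hl, hch, hmap, -, -⟩ := (Λ.mem_relRange hσ).mp hv
    exact Or.inr ⟨l, hl, hch, hmap⟩

lemma rangeL_nonempty_of_mem_LStar {σ : List A} (h : σ ∈ Λ.LStar) :
    (Λ.rangeL σ).Nonempty := by
  rcases h with rfl | ⟨l, hl, hch, rfl⟩
  · obtain ⟨v⟩ := Λ.nonempty_V
    exact ⟨v, by simp⟩
  · exact ⟨_, (Λ.mem_relRange (by simpa using hl)).mpr ⟨l, hl, hch, rfl, trivial, rfl⟩⟩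

lemma mem_LStar_of_subset_rangeL {σ : List A} {B : Set V} (hB : B.Nonempty)
    (h : B ⊆ Λ.rangeL σ) : σ ∈ Λ.LStar :=
  Λ.mem_LStar_of_rangeL_nonempty (hB.mono h)

lemma mem_LStar_of_prefix {σ τ : List A} (h : σ ∈ Λ.LStar) (hp : τ <+: σ) :
    τ ∈ Λ.LStar := by
  obtain ⟨ρ, rfl⟩ := hp
  have := Λ.rangeL_nonempty_of_mem_LStar h
  rw [Λ.rangeL_append] at this
  exact Λ.mem_LStar_of_rangeL_nonempty (Λ.nonempty_of_relRange_nonempty this)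

lemma mem_LStar_of_suffix {σ τ : List A} (h : σ ∈ Λ.LStar) (hs : τ <:+ σ) :
    τ ∈ Λ.LStar := by
  obtain ⟨ρ, rfl⟩ := hs
  exact Λ.mem_LStar_of_rangeL_nonempty
    ((Λ.rangeL_nonempty_of_mem_LStar h).mono (Λ.rangeL_append_subset ρ τ))

lemma drop_mem_LStar {σ : List A} (h : σ ∈ Λ.LStar) (n : ℕ) : σ.drop n ∈ Λ.LStar :=
  Λ.mem_LStar_of_suffix h (drop_suffix n σ)

/-! ### Filters in `E(S)` -/

lemma tmul_mk_mk_of_prefix {δ ε : List A} (B C : Set V) (h : δ <+: ε) :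
    Λ.tmul (Tr.mk δ B δ) (Tr.mk ε C ε) =
      if (Λ.relRange B (ε.drop δ.length) ∩ C).Nonempty then
        Tr.mk ε (Λ.relRange B (ε.drop δ.length) ∩ C) ε else Tr.zero := by
  obtain ⟨ρ, rfl⟩ := h
  show (if _ then _ else _) = _
  by_cases hne : (Λ.relRange B ((δ ++ ρ).drop δ.length) ∩ C).Nonempty
  · rw [if_pos ⟨⟨ρ, rfl⟩, hne⟩, if_pos hne, drop_left]
  · rw [if_neg (fun hc => hne hc.2), if_neg hne, if_neg]
    rintro ⟨hc, hc'⟩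
    obtain rfl : ρ = [] := by simpa using hc.length_le
    simp at hne hc'
    exact hne hc'

lemma tmul_mk_mk_of_prefix' {δ ε : List A} (B C : Set V) (h : ε <+: δ) :
    Λ.tmul (Tr.mk δ B δ) (Tr.mk ε C ε) =
      if (B ∩ Λ.relRange C (δ.drop ε.length)).Nonempty then
        Tr.mk δ (B ∩ Λ.relRange C (δ.drop ε.length)) δ else Tr.zero := by
  rcases eq_or_ne ε δ with rfl | hne
  · simp [Λ.tmul_mk_mk_of_prefix B C (prefix_refl ε)]
  obtain ⟨ρ, rfl⟩ := h
  show (if _ then _ else _) = _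
  rw [if_neg, drop_left]
  · by_cases h2 : (B ∩ Λ.relRange C ρ).Nonempty
    · rw [if_pos ⟨⟨ρ, rfl⟩, h2⟩, if_pos h2]
    · rw [if_neg (fun hc => h2 hc.2), if_neg h2]
  · rintro ⟨hc, -⟩
    obtain rfl : ρ = [] := by simpa using hc.length_le
    exact hne (append_nil ε).symm

lemma tmul_mk_mk_of_not_prefix {δ ε : List A} (B C : Set V) (h₁ : ¬δ <+: ε)
    (h₂ : ¬ε <+: δ) : Λ.tmul (Tr.mk δ B δ) (Tr.mk ε C ε) = Tr.zero := by
  show (if _ then _ else _) = _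
  rw [if_neg (fun hc => h₁ hc.1), if_neg (fun hc => h₂ hc.1)]

lemma prefix_of_tmul_mk_mk_eq_self {δ ε : List A} {B C : Set V}
    (h : Λ.tmul (Tr.mk δ B δ) (Tr.mk ε C ε) = Tr.mk δ B δ) :
    ε <+: δ ∧ B ⊆ Λ.relRange C (δ.drop ε.length) := by
  by_cases hεδ : ε <+: δ
  · rw [Λ.tmul_mk_mk_of_prefix' B C hεδ] at h
    split_ifs at h
    obtain ⟨-, hB, -⟩ := Tr.mk.inj h
    exact ⟨hεδ, hB ▸ Set.inter_subset_right⟩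
  · by_cases hδε : δ <+: ε
    · rw [Λ.tmul_mk_mk_of_prefix B C hδε] at h
      split_ifs at h
      exact absurd ((Tr.mk.inj h).1 ▸ prefix_refl ε) hεδ
    · simp [Λ.tmul_mk_mk_of_not_prefix B C hδε hεδ] at h

variable {Λ}

namespace IsFilterES

variable {ξ : Set (Tr V A)} (hξ : Λ.IsFilterES ξ)
include hξ

lemma zero_not_mem : Tr.zero ∉ ξ := fun h => (hξ.2.1 _ h).2 rfl

lemma exists_eq_mk {t : Tr V A} (ht : t ∈ ξ) :
    ∃ δ B, t = Tr.mk δ B δ ∧ δ ∈ Λ.LStar ∧ B ∈ Λ.Aset δ ∧ B.Nonempty := by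
  obtain ⟨hE, hz⟩ := hξ.2.1 _ ht
  rcases hE with rfl | ⟨δ, B, rfl, hδ, hB, hne⟩
  · exact absurd rfl hz
  · exact ⟨δ, B, rfl, hδ, hB, hne⟩

lemma of_mk_mem {δ : List A} {B : Set V} (h : Tr.mk δ B δ ∈ ξ) :
    δ ∈ Λ.LStar ∧ B ∈ Λ.Aset δ ∧ B.Nonempty := by
  obtain ⟨δ', B', he, hrest⟩ := hξ.exists_eq_mk h
  cases he
  exact hrest

lemma mk_mem_of_subset {δ : List A} {B C : Set V} (hB : Tr.mk δ B δ ∈ ξ) (hBC : B ⊆ C)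
    (hC : C ∈ Λ.Aset δ) : Tr.mk δ C δ ∈ ξ := by
  obtain ⟨hδ, -, hne⟩ := hξ.of_mk_mem hB
  refine hξ.2.2.2 _ hB _ (Or.inr ⟨δ, C, rfl, hδ, hC, hne.mono hBC⟩) ?_
  rw [Λ.tmul_mk_mk_of_prefix B C (prefix_refl δ)]
  simp [Set.inter_eq_left.mpr hBC, hne]

lemma mk_inter_mem {δ : List A} {B C : Set V} (hB : Tr.mk δ B δ ∈ ξ)
    (hC : Tr.mk δ C δ ∈ ξ) : Tr.mk δ (B ∩ C) δ ∈ ξ := by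
  have hp := hξ.2.2.1 _ hB _ hC
  rw [Λ.tmul_mk_mk_of_prefix B C (prefix_refl δ)] at hp
  simp only [drop_length, relRange_nil] at hp
  split_ifs at hp
  · exact hp
  · exact absurd hp hξ.zero_not_mem

lemma mk_mem_of_append {δ σ : List A} {C D : Set V} (hD : Tr.mk (δ ++ σ) D (δ ++ σ) ∈ ξ)
    (hDC : D ⊆ Λ.relRange C σ) (hC : C ∈ Λ.Aset δ) : Tr.mk δ C δ ∈ ξ := by
  obtain ⟨hδσ, -, hne⟩ := hξ.of_mk_mem hD
  have hCne : C.Nonempty := Λ.nonempty_of_relRange_nonempty (hne.mono hDC)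
  refine hξ.2.2.2 _ hD _
    (Or.inr ⟨δ, C, rfl, Λ.mem_LStar_of_prefix hδσ (prefix_append δ σ), hC, hCne⟩) ?_
  rw [Λ.tmul_mk_mk_of_prefix' D C (prefix_append δ σ), drop_left,
    Set.inter_eq_left.mpr hDC, if_pos hne]

lemma mk_append_mem {δ σ : List A} {C D : Set V} (hC : Tr.mk δ C δ ∈ ξ)
    (hD : Tr.mk (δ ++ σ) D (δ ++ σ) ∈ ξ) :
    Tr.mk (δ ++ σ) (D ∩ Λ.relRange C σ) (δ ++ σ) ∈ ξ := by
  have hp := hξ.2.2.1 _ hC _ hD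
  rw [Λ.tmul_mk_mk_of_prefix C D (prefix_append δ σ), drop_left] at hp
  split_ifs at hp
  · rwa [Set.inter_comm] at hp
  · exact absurd hp hξ.zero_not_mem

lemma prefix_or_prefix {δ ε : List A} {B C : Set V} (hB : Tr.mk δ B δ ∈ ξ)
    (hC : Tr.mk ε C ε ∈ ξ) : δ <+: ε ∨ ε <+: δ := by
  by_contra! hc
  have hp := hξ.2.2.1 _ hB _ hC
  rw [Λ.tmul_mk_mk_of_not_prefix B C hc.1 hc.2] at hp
  exact hξ.zero_not_mem hp

lemma tmul_mem_iff {e f : Tr V A} (he : e ∈ Λ.ESet) (hf : f ∈ Λ.ESet) :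
    Λ.tmul e f ∈ ξ ↔ e ∈ ξ ∧ f ∈ ξ := by
  refine ⟨fun h => ?_, fun h => hξ.2.2.1 _ h.1 _ h.2⟩
  rcases he with rfl | ⟨δ, B, rfl, -, hB, -⟩
  · exact absurd h hξ.zero_not_mem
  rcases hf with rfl | ⟨ε, C, rfl, -, hC, -⟩
  · exact absurd h hξ.zero_not_mem
  by_cases hδε : δ <+: ε
  · obtain ⟨ρ, rfl⟩ := hδε
    rw [Λ.tmul_mk_mk_of_prefix B C (prefix_append δ ρ), drop_left] at h
    split_ifs at h
    · exact ⟨hξ.mk_mem_of_append h Set.inter_subset_left hB,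
        hξ.mk_mem_of_subset h Set.inter_subset_right hC⟩
    · exact absurd h hξ.zero_not_mem
  by_cases hεδ : ε <+: δ
  · obtain ⟨ρ, rfl⟩ := hεδ
    rw [Λ.tmul_mk_mk_of_prefix' B C (prefix_append ε ρ), drop_left] at h
    split_ifs at h
    · exact ⟨hξ.mk_mem_of_subset h Set.inter_subset_left hB,
        hξ.mk_mem_of_append h Set.inter_subset_right hC⟩
    · exact absurd h hξ.zero_not_mem
  · rw [Λ.tmul_mk_mk_of_not_prefix B C hδε hεδ] at h
    exact absurd h hξ.zero_not_mem

lemma isChar_charOf : Λ.IsChar (Λ.charOf ξ) := by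
  obtain ⟨t, ht⟩ := hξ.1
  refine ⟨⟨t, if_pos ht⟩, fun e he => if_neg fun h => he (hξ.2.1 _ h).1,
    if_neg hξ.zero_not_mem, fun e he f hf => ?_⟩
  simp only [charOf, hξ.tmul_mem_iff he hf]
  by_cases e ∈ ξ <;> by_cases f ∈ ξ <;> simp [*]

end IsFilterES

lemma isFilterES_of_forall_mk {η : Set (Tr V A)} (hne : η.Nonempty)
    (hmem : ∀ t ∈ η, ∃ δ B, t = Tr.mk δ B δ ∧ δ ∈ Λ.LStar ∧ B ∈ Λ.Aset δ ∧ B.Nonempty)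
    (hcomp : ∀ {δ ε : List A} {B C : Set V}, Tr.mk δ B δ ∈ η → Tr.mk ε C ε ∈ η →
      δ <+: ε ∨ ε <+: δ)
    (hmul : ∀ {δ σ : List A} {B C : Set V}, Tr.mk (δ ++ σ) B (δ ++ σ) ∈ η →
      Tr.mk δ C δ ∈ η → Tr.mk (δ ++ σ) (B ∩ Λ.relRange C σ) (δ ++ σ) ∈ η)
    (hup : ∀ {δ σ : List A} {B C : Set V}, Tr.mk (δ ++ σ) B (δ ++ σ) ∈ η →
      C ∈ Λ.Aset δ → B ⊆ Λ.relRange C σ → Tr.mk δ C δ ∈ η) :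
    Λ.IsFilterES η := by
  have hne_of_mem : ∀ {δ : List A} {B : Set V}, Tr.mk δ B δ ∈ η → B.Nonempty := by
    intro δ B h
    obtain ⟨_, _, he, -, -, hB⟩ := hmem _ h
    cases he
    exact hB
  refine ⟨hne, fun t ht => ?_, fun p hp q hq => ?_, fun p hp q hq hpq => ?_⟩
  · obtain ⟨δ, B, rfl, hδ, hB, hBne⟩ := hmem t ht
    exact ⟨Or.inr ⟨δ, B, rfl, hδ, hB, hBne⟩, nofun⟩
  · obtain ⟨δ, B, rfl, -⟩ := hmem p hp
    obtain ⟨ε, C, rfl, -⟩ := hmem q hq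
    rcases hcomp hp hq with ⟨ρ, rfl⟩ | ⟨ρ, rfl⟩
    · have h := hmul hq hp
      rw [Λ.tmul_mk_mk_of_prefix B C (prefix_append δ ρ), drop_left, Set.inter_comm,
        if_pos (hne_of_mem h)]
      exact h
    · have h := hmul hp hq
      rw [Λ.tmul_mk_mk_of_prefix' B C (prefix_append ε ρ), drop_left, if_pos (hne_of_mem h)]
      exact h
  · obtain ⟨δ, B, rfl, -⟩ := hmem p hp
    rcases hq with rfl | ⟨ε, C, rfl, -, hC, -⟩
    · exact absurd hpq nofun
    obtain ⟨⟨ρ, rfl⟩, hBC⟩ := Λ.prefix_of_tmul_mk_mk_eq_self hpq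
    rw [drop_left] at hBC
    exact hup hp hC hBC

lemma exists_isUltraES_agree_of_mem_tightSpectrum {ξ : Set (Tr V A)}
    (hξ : Λ.charOf ξ ∈ Λ.tightSpectrum) (E : Finset (Tr V A)) :
    ∃ ζ, Λ.IsUltraES ζ ∧ ∀ t ∈ E, (t ∈ ζ ↔ t ∈ ξ) := by
  have hO : IsOpen ((E : Set (Tr V A)).pi fun t => {Λ.charOf ξ t}) :=
    isOpen_set_pi E.finite_toSet fun _ _ => isOpen_discrete _
  obtain ⟨-, hφ, ζ, hζ, rfl⟩ := mem_closure_iff.mp hξ.2 _ hO (Set.mem_pi.mpr fun _ _ => rfl)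
  refine ⟨ζ, hζ, fun t ht => ?_⟩
  have h : Λ.charOf ζ t = Λ.charOf ξ t := Set.mem_pi.mp hφ t ht
  unfold charOf at h
  split_ifs at h <;> simp_all

lemma isTightFilter_iff {ξ : Set (Tr V A)} : Λ.IsTightFilter ξ ↔
    Λ.IsFilterES ξ ∧ ∀ E : Finset (Tr V A), ∃ ζ, Λ.IsUltraES ζ ∧ ∀ t ∈ E, (t ∈ ζ ↔ t ∈ ξ) := by
  refine ⟨fun h => ⟨h.1, exists_isUltraES_agree_of_mem_tightSpectrum h.2⟩,
    fun ⟨hξ, hagree⟩ => ⟨hξ, hξ.isChar_charOf, mem_closure_iff.mpr fun O hO hmem => ?_⟩⟩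
  obtain ⟨I, u, hIu, hsub⟩ := isOpen_pi_iff.mp hO _ hmem
  obtain ⟨ζ, hζ, hζξ⟩ := hagree I
  refine ⟨Λ.charOf ζ, hsub (Set.mem_pi.mpr fun t ht => ?_), ζ, hζ, rfl⟩
  have h : Λ.charOf ζ t = Λ.charOf ξ t := by simp [charOf, hζξ t ht]
  exact h ▸ (hIu t ht).2

lemma IsTightFilter.map_of_mem_iff {F : Set (Tr V A) → Set (Tr V A)} {P : Tr V A → Prop}
    {ν : Tr V A → Tr V A} {e : Tr V A}
    (hmem : ∀ ζ, Λ.IsFilterES ζ → e ∈ ζ → ∀ t, t ∈ F ζ ↔ P t ∧ ν t ∈ ζ)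
    (hfilter : ∀ ζ, Λ.IsFilterES ζ → e ∈ ζ → Λ.IsFilterES (F ζ))
    (hultra : ∀ ζ, Λ.IsUltraES ζ → e ∈ ζ → Λ.IsUltraES (F ζ))
    {ξ : Set (Tr V A)} (hξ : Λ.IsTightFilter ξ) (he : e ∈ ξ) : Λ.IsTightFilter (F ξ) := by
  classical
  rw [isTightFilter_iff] at hξ ⊢
  refine ⟨hfilter ξ hξ.1 he, fun E => ?_⟩
  obtain ⟨ζ, hζ, hζξ⟩ := hξ.2 (insert e (E.image ν))
  have heζ : e ∈ ζ := (hζξ e (Finset.mem_insert_self _ _)).mpr he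
  refine ⟨F ζ, hultra ζ hζ heζ, fun t ht => ?_⟩
  rw [hmem ζ hζ.1 heζ, hmem ξ hξ.1 he,
    hζξ _ (Finset.mem_insert_of_mem (Finset.mem_image_of_mem ν ht))]

lemma IsUltraES.map {F H : Set (Tr V A) → Set (Tr V A)} {ζ : Set (Tr V A)}
    (hζ : Λ.IsUltraES ζ) (hFζ : Λ.IsFilterES (F ζ)) (hHF : H (F ζ) = ζ)
    (hH : ∀ η, Λ.IsFilterES η → F ζ ⊆ η →
      Λ.IsFilterES (H η) ∧ H (F ζ) ⊆ H η ∧ F (H η) = η) :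
    Λ.IsUltraES (F ζ) := by
  refine ⟨hFζ, fun η hη hFη => ?_⟩
  obtain ⟨hHη, hmono, hFH⟩ := hH η hη hFη
  rw [hζ.2 _ hHη (hHF ▸ hmono), hFH]

/-! ### Cutting and gluing -/

lemma IsLS.inter_rangeL_mem_Aset (hLS : Λ.IsLS) {B : Set V} (hB : B ∈ Λ.𝒜) {σ : List A}
    (hσ : σ ∈ Λ.LStar) (hσ0 : σ ≠ []) : B ∩ Λ.rangeL σ ∈ Λ.Aset σ :=
  ⟨hLS.inter_mem _ hB _ (hLS.range_mem σ hσ hσ0), Set.inter_subset_right⟩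

lemma IsLS.relRange_mem_Aset (hLS : Λ.IsLS) {B : Set V} (hB : B ∈ Λ.𝒜) {σ : List A}
    (hσ : σ ∈ Λ.LStar) : Λ.relRange B σ ∈ Λ.Aset σ :=
  ⟨hLS.relRange_mem B hB σ hσ, Λ.relRange_subset_rangeL B σ⟩

lemma IsWLR.relRange_inter (hW : Λ.IsWLR) {X Y : Set V} (hX : X ∈ Λ.𝒜) (hY : Y ∈ Λ.𝒜)
    {σ : List A} (hσ : σ ∈ Λ.LStar) :
    Λ.relRange (X ∩ Y) σ = Λ.relRange X σ ∩ Λ.relRange Y σ := by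
  rcases eq_or_ne σ [] with rfl | hσ0
  · simp
  · exact hW.wlr X hX Y hY σ hσ hσ0

section Cut

variable {ξ : Set (Tr V A)} {α : List A}

lemma mem_Hcut_iff (hα0 : α ≠ []) {t : Tr V A} : t ∈ Λ.Hcut α ξ ↔ ∃ δ B, t = Tr.mk δ B δ ∧
    B ∈ Λ.Aset δ ∧ ∃ D, Tr.mk (α ++ δ) D (α ++ δ) ∈ ξ ∧ D ⊆ B := by
  rw [Hcut, if_neg hα0]; rfl

lemma IsFilterES.mk_mem_Hcut_iff (hξ : Λ.IsFilterES ξ) (hLS : Λ.IsLS) (hα0 : α ≠ [])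
    {δ : List A} {B : Set V} : Tr.mk δ B δ ∈ Λ.Hcut α ξ ↔
      B ∈ Λ.Aset δ ∧ Tr.mk (α ++ δ) (B ∩ Λ.rangeL (α ++ δ)) (α ++ δ) ∈ ξ := by
  rw [mem_Hcut_iff hα0]
  constructor
  · rintro ⟨δ, B, he, hB, D, hD, hDB⟩
    obtain ⟨rfl, rfl, -⟩ := Tr.mk.inj he
    obtain ⟨hαδ, hDA, -⟩ := hξ.of_mk_mem hD
    exact ⟨hB, hξ.mk_mem_of_subset hD (Set.subset_inter hDB hDA.2)
      (hLS.inter_rangeL_mem_Aset hB.1 hαδ (append_ne_nil_of_left_ne_nil hα0 δ))⟩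
  · rintro ⟨hB, h⟩
    exact ⟨δ, B, rfl, hB, _, h, Set.inter_subset_left⟩

lemma IsFilterES.mk_rangeL_mem_Hcut (hξ : Λ.IsFilterES ξ) (hLS : Λ.IsLS) (hα0 : α ≠ []) {D : Set V}
    (hD : Tr.mk α D α ∈ ξ) : Tr.mk [] (Λ.rangeL α) [] ∈ Λ.Hcut α ξ := by
  obtain ⟨hα, hDA, -⟩ := hξ.of_mk_mem hD
  have hrα : Λ.rangeL α ∈ Λ.𝒜 := hLS.range_mem α hα hα0
  refine (hξ.mk_mem_Hcut_iff hLS hα0).mpr ⟨⟨hrα, Set.subset_univ _⟩, ?_⟩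
  rw [append_nil, Set.inter_self]
  exact hξ.mk_mem_of_subset hD hDA.2 ⟨hrα, subset_rfl⟩

lemma IsFilterES.mk_inter_mem_Hcut (hξ : Λ.IsFilterES ξ) (hLS : Λ.IsLS) (hα0 : α ≠ [])
    {δ σ : List A} {B C : Set V} (hB : Tr.mk (δ ++ σ) B (δ ++ σ) ∈ Λ.Hcut α ξ)
    (hC : Tr.mk δ C δ ∈ Λ.Hcut α ξ) :
    Tr.mk (δ ++ σ) (B ∩ Λ.relRange C σ) (δ ++ σ) ∈ Λ.Hcut α ξ := by
  obtain ⟨hBA, hB⟩ := (hξ.mk_mem_Hcut_iff hLS hα0).mp hB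
  obtain ⟨hCA, hC⟩ := (hξ.mk_mem_Hcut_iff hLS hα0).mp hC
  rw [← append_assoc] at hB
  have h := hξ.mk_append_mem hC hB
  obtain ⟨hαδσ, -⟩ := hξ.of_mk_mem h
  have hCσ := hLS.relRange_mem C hCA.1 σ (Λ.mem_LStar_of_suffix hαδσ (suffix_append _ σ))
  have hBCσ : B ∩ Λ.relRange C σ ∈ Λ.𝒜 := hLS.inter_mem _ hBA.1 _ hCσ
  refine (hξ.mk_mem_Hcut_iff hLS hα0).mpr ⟨⟨hBCσ, Set.inter_subset_left.trans hBA.2⟩, ?_⟩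
  rw [← append_assoc]
  refine hξ.mk_mem_of_subset h ?_ (hLS.inter_rangeL_mem_Aset hBCσ hαδσ (by simp [hα0]))
  exact fun v ⟨⟨hvB, hvr⟩, hvC⟩ => ⟨⟨hvB, Λ.relRange_mono Set.inter_subset_left σ hvC⟩, hvr⟩

lemma IsFilterES.Hcut (hξ : Λ.IsFilterES ξ) (hW : Λ.IsWLR) (hα0 : α ≠ []) {D : Set V}
    (hD : Tr.mk α D α ∈ ξ) : Λ.IsFilterES (Λ.Hcut α ξ) := by
  have hLS := hW.toIsLS
  have hmk := fun {δ : List A} {B : Set V} => hξ.mk_mem_Hcut_iff hLS hα0 (δ := δ) (B := B)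
  refine isFilterES_of_forall_mk ⟨_, hξ.mk_rangeL_mem_Hcut hLS hα0 hD⟩ ?_ ?_
    (hξ.mk_inter_mem_Hcut hLS hα0) ?_
  · intro t ht
    obtain ⟨δ, B, rfl, hB, -⟩ := (mem_Hcut_iff hα0).mp ht
    obtain ⟨hαδ, -, hne⟩ := hξ.of_mk_mem (hmk.mp ht).2
    exact ⟨δ, B, rfl, Λ.mem_LStar_of_suffix hαδ (suffix_append α δ), hB,
      hne.mono Set.inter_subset_left⟩
  · intro δ ε B C hB hC
    simpa using hξ.prefix_or_prefix (hmk.mp hB).2 (hmk.mp hC).2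
  · intro δ σ B C hB hC hBC
    obtain ⟨-, hB⟩ := hmk.mp hB
    obtain ⟨hαδσ, -⟩ := hξ.of_mk_mem hB
    have hαδ := Λ.mem_LStar_of_prefix hαδσ ((prefix_append_right_inj α).mpr (prefix_append δ σ))
    have hσ : σ ∈ Λ.LStar := Λ.mem_LStar_of_suffix hαδσ ⟨α ++ δ, append_assoc ..⟩
    have hαδ0 : α ++ δ ≠ [] := append_ne_nil_of_left_ne_nil hα0 δ
    refine hmk.mpr ⟨hC, hξ.mk_mem_of_append (σ := σ) (by rwa [append_assoc]) ?_
      (hLS.inter_rangeL_mem_Aset hC.1 hαδ hαδ0)⟩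
    rw [hW.relRange_inter hC.1 (hLS.range_mem _ hαδ hαδ0) hσ, ← rangeL_append, append_assoc]
    exact Set.inter_subset_inter_left _ hBC

end Cut

section Glue

variable {ξ : Set (Tr V A)} {α : List A}

lemma exists_eq_mk_of_mem_Gglue (hα0 : α ≠ []) {t : Tr V A} (ht : t ∈ Λ.Gglue α ξ) :
    ∃ δ B, t = Tr.mk δ B δ := by
  rw [Gglue, if_neg hα0] at ht
  split_ifs at ht <;> obtain ⟨δ, B, rfl, -⟩ := ht <;> exact ⟨δ, B, rfl⟩

lemma IsFilterES.exists_mk_singleton_mem (hξ : Λ.IsFilterES ξ) (hLS : Λ.IsLS)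
    (hw : ∃ (δ₀ : List A) (B₀ : Set V), δ₀ ≠ [] ∧ Tr.mk δ₀ B₀ δ₀ ∈ ξ) :
    ∃ b, Tr.mk [b] (Λ.rangeL [b]) [b] ∈ ξ := by
  obtain ⟨_, B₀, hδ₀, hB₀⟩ := hw
  obtain ⟨b, δ, rfl⟩ := exists_cons_of_ne_nil hδ₀
  obtain ⟨hbδ, hB₀A, -⟩ := hξ.of_mk_mem hB₀
  have hb := Λ.mem_LStar_of_prefix hbδ (prefix_append [b] δ)
  refine ⟨b, hξ.mk_mem_of_append (δ := [b]) hB₀ ?_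
    ⟨hLS.range_mem _ hb (cons_ne_nil b []), subset_rfl⟩⟩
  rw [← rangeL_append]
  exact hB₀A.2

lemma IsFilterES.mk_mem_Gglue_iff_of_exists (hξ : Λ.IsFilterES ξ) (hLS : Λ.IsLS)
    (hα : α ∈ Λ.LStar) (hα0 : α ≠ []) (hrα : Tr.mk [] (Λ.rangeL α) [] ∈ ξ)
    (hw : ∃ (δ₀ : List A) (B₀ : Set V), δ₀ ≠ [] ∧ Tr.mk δ₀ B₀ δ₀ ∈ ξ) {δ : List A} {B : Set V} :
    Tr.mk δ B δ ∈ Λ.Gglue α ξ ↔ (δ <+: α ∨ α <+: δ) ∧ B ∈ Λ.Aset δ ∧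
      Tr.mk (δ.drop α.length) (Λ.relRange B (α.drop δ.length)) (δ.drop α.length) ∈ ξ := by
  rw [Gglue, if_neg hα0, if_pos hw]
  constructor
  · rintro ⟨δ', B', he, ⟨⟨γ, rfl⟩, -, C, hC, rfl⟩ | ⟨hδα, hB, b, C, hC, hCB⟩⟩ <;>
      obtain ⟨rfl, rfl, -⟩ := Tr.mk.inj he
    · rw [drop_left] at hC
      have h := hξ.mk_append_mem (δ := []) hrα hC
      rw [← rangeL_append] at h
      exact ⟨Or.inr (prefix_append α γ), ⟨(hξ.of_mk_mem h).2.1.1, Set.inter_subset_right⟩,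
        by simpa [drop_eq_nil_of_le] using h⟩
    · refine ⟨Or.inl hδα, hB, ?_⟩
      have h := hξ.mk_append_mem (δ := []) (σ := [b]) hrα hC
      rw [← rangeL_append, ← hCB, relRange_append] at h
      rw [drop_eq_nil_of_le hδα.length_le]
      exact hξ.mk_mem_of_append (δ := []) h subset_rfl
        ⟨hLS.relRange_mem B hB.1 _ (Λ.drop_mem_LStar hα _), Set.subset_univ _⟩
  · rintro ⟨hcomp, hB, h⟩
    refine ⟨δ, B, rfl, ?_⟩
    by_cases hαδ : α <+: δ ∧ α ≠ δ
    · rw [drop_eq_nil_of_le hαδ.1.length_le, relRange_nil] at h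
      exact Or.inl ⟨hαδ.1, hαδ.2, B, h, (Set.inter_eq_left.mpr hB.2).symm⟩
    have hδα : δ <+: α := by
      rcases hcomp with h | h
      · exact h
      · exact (not_and_not_right.mp hαδ h) ▸ prefix_refl δ
    rw [drop_eq_nil_of_le hδα.length_le] at h
    obtain ⟨b, hb⟩ := hξ.exists_mk_singleton_mem hLS hw
    have hX := hLS.relRange_mem_Aset hB.1 (Λ.drop_mem_LStar hα δ.length)
    refine Or.inr ⟨hδα, hB, b, _, hξ.mk_mem_of_subset (hξ.mk_append_mem (δ := []) h hb)
      Set.inter_subset_right (hLS.relRange_mem_Aset hX.1 (hξ.of_mk_mem hb).1), ?_⟩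
    rw [relRange_append, rangeL_append, Set.inter_eq_left.mpr
      (Λ.relRange_mono (Λ.relRange_drop_subset_rangeL_of_prefix hδα hB.2) [b])]

lemma IsFilterES.mk_mem_Gglue_iff_of_not_exists (hξ : Λ.IsFilterES ξ) (hα0 : α ≠ [])
    (hrα : Tr.mk [] (Λ.rangeL α) [] ∈ ξ)
    (hw : ¬∃ (δ₀ : List A) (B₀ : Set V), δ₀ ≠ [] ∧ Tr.mk δ₀ B₀ δ₀ ∈ ξ) {δ : List A}
    {B : Set V} : Tr.mk δ B δ ∈ Λ.Gglue α ξ ↔ (δ <+: α ∨ α <+: δ) ∧ B ∈ Λ.Aset δ ∧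
      Tr.mk (δ.drop α.length) (Λ.relRange B (α.drop δ.length)) (δ.drop α.length) ∈ ξ := by
  rw [Gglue, if_neg hα0, if_neg hw]
  constructor
  · rintro ⟨δ', B', he, hδα, hB, C, hC, hCB⟩
    obtain ⟨rfl, rfl, -⟩ := Tr.mk.inj he
    rw [drop_eq_nil_of_le hδα.length_le, hCB]
    exact ⟨Or.inl hδα, hB, hξ.mk_inter_mem hC hrα⟩
  · rintro ⟨hcomp, hB, h⟩
    have hδα : δ <+: α := by
      by_contra hδα
      obtain ⟨γ, rfl⟩ := hcomp.resolve_left hδα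
      rw [drop_left] at h
      exact hw ⟨γ, _, fun hγ => hδα (by simp [hγ]), h⟩
    rw [drop_eq_nil_of_le hδα.length_le] at h
    exact ⟨δ, B, rfl, hδα, hB, _, h,
      (Set.inter_eq_left.mpr (Λ.relRange_drop_subset_rangeL_of_prefix hδα hB.2)).symm⟩

lemma IsFilterES.mk_mem_Gglue_iff (hξ : Λ.IsFilterES ξ) (hLS : Λ.IsLS) (hα : α ∈ Λ.LStar)
    (hα0 : α ≠ []) (hrα : Tr.mk [] (Λ.rangeL α) [] ∈ ξ) {δ : List A} {B : Set V} :
    Tr.mk δ B δ ∈ Λ.Gglue α ξ ↔ (δ <+: α ∨ α <+: δ) ∧ B ∈ Λ.Aset δ ∧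
      Tr.mk (δ.drop α.length) (Λ.relRange B (α.drop δ.length)) (δ.drop α.length) ∈ ξ := by
  by_cases hw : ∃ (δ₀ : List A) (B₀ : Set V), δ₀ ≠ [] ∧ Tr.mk δ₀ B₀ δ₀ ∈ ξ
  · exact hξ.mk_mem_Gglue_iff_of_exists hLS hα hα0 hrα hw
  · exact hξ.mk_mem_Gglue_iff_of_not_exists hα0 hrα hw

lemma IsFilterES.mk_rangeL_mem_Gglue (hξ : Λ.IsFilterES ξ) (hLS : Λ.IsLS) (hα : α ∈ Λ.LStar)
    (hα0 : α ≠ []) (hrα : Tr.mk [] (Λ.rangeL α) [] ∈ ξ) :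
    Tr.mk α (Λ.rangeL α) α ∈ Λ.Gglue α ξ :=
  (hξ.mk_mem_Gglue_iff hLS hα hα0 hrα).mpr
    ⟨Or.inl (prefix_refl α), ⟨hLS.range_mem α hα hα0, subset_rfl⟩, by simpa using hrα⟩

lemma IsFilterES.mk_inter_mem_Gglue (hξ : Λ.IsFilterES ξ) (hW : Λ.IsWLR) (hα : α ∈ Λ.LStar)
    (hα0 : α ≠ []) (hrα : Tr.mk [] (Λ.rangeL α) [] ∈ ξ) {δ σ : List A} {B C : Set V}
    (hB : Tr.mk (δ ++ σ) B (δ ++ σ) ∈ Λ.Gglue α ξ) (hC : Tr.mk δ C δ ∈ Λ.Gglue α ξ) :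
    Tr.mk (δ ++ σ) (B ∩ Λ.relRange C σ) (δ ++ σ) ∈ Λ.Gglue α ξ := by
  have hLS := hW.toIsLS
  obtain ⟨hδσ, hBA, hB⟩ := (hξ.mk_mem_Gglue_iff hLS hα hα0 hrα).mp hB
  obtain ⟨hδ, hCA, hC⟩ := (hξ.mk_mem_Gglue_iff hLS hα hα0 hrα).mp hC
  obtain ⟨τ, h₁, h₂⟩ := exists_drop_append_eq hδ hδσ
  have hσ : σ ∈ Λ.LStar := Λ.mem_LStar_of_suffix
    (Λ.mem_LStar_of_subset_rangeL (Λ.nonempty_of_relRange_nonempty (hξ.of_mk_mem hB).2.2)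
      hBA.2) (suffix_append δ σ)
  have hCσ : Λ.relRange C σ ∈ Λ.𝒜 := hLS.relRange_mem C hCA.1 σ hσ
  rw [h₁] at hB
  have h := hξ.mk_append_mem hC hB
  rw [← relRange_append, h₂, relRange_append,
    ← hW.relRange_inter hBA.1 hCσ (Λ.drop_mem_LStar hα _), ← h₁] at h
  exact (hξ.mk_mem_Gglue_iff hLS hα hα0 hrα).mpr
    ⟨hδσ, ⟨hLS.inter_mem _ hBA.1 _ hCσ, Set.inter_subset_left.trans hBA.2⟩, h⟩

lemma IsFilterES.Gglue (hξ : Λ.IsFilterES ξ) (hW : Λ.IsWLR) (hα : α ∈ Λ.LStar) (hα0 : α ≠ [])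
    (hrα : Tr.mk [] (Λ.rangeL α) [] ∈ ξ) : Λ.IsFilterES (Λ.Gglue α ξ) := by
  have hLS := hW.toIsLS
  have hmk := fun {δ : List A} {B : Set V} => hξ.mk_mem_Gglue_iff hLS hα hα0 hrα (δ := δ) (B := B)
  refine isFilterES_of_forall_mk ⟨_, hξ.mk_rangeL_mem_Gglue hLS hα hα0 hrα⟩ ?_ ?_
    (hξ.mk_inter_mem_Gglue hW hα hα0 hrα) ?_
  · intro t ht
    obtain ⟨δ, B, rfl⟩ := exists_eq_mk_of_mem_Gglue hα0 ht
    obtain ⟨-, hB, h⟩ := hmk.mp ht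
    have hBne := Λ.nonempty_of_relRange_nonempty (hξ.of_mk_mem h).2.2
    exact ⟨δ, B, rfl, Λ.mem_LStar_of_subset_rangeL hBne hB.2, hB, hBne⟩
  · intro δ ε B C hB hC
    obtain ⟨hδ, -, hB⟩ := hmk.mp hB
    obtain ⟨hε, -, hC⟩ := hmk.mp hC
    exact prefix_or_prefix_of_drop hδ hε (hξ.prefix_or_prefix hB hC)
  · intro δ σ B C hB hC hBC
    obtain ⟨hδσ, -, hB⟩ := hmk.mp hB
    have hδ : δ <+: α ∨ α <+: δ := hδσ.elim (fun h => Or.inl ((prefix_append δ σ).trans h))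
      (prefix_or_prefix_of_prefix (prefix_append δ σ))
    obtain ⟨τ, h₁, h₂⟩ := exists_drop_append_eq hδ hδσ
    rw [h₁] at hB
    refine hmk.mpr ⟨hδ, hC, hξ.mk_mem_of_append hB ?_
      ⟨hLS.relRange_mem C hC.1 _ (Λ.drop_mem_LStar hα _), ?_⟩⟩
    · rw [← relRange_append, h₂, relRange_append]
      exact Λ.relRange_mono hBC _
    · exact (Λ.relRange_drop_subset_rangeL hδ hC.2).trans (Λ.rangeL_append_subset _ _)

end Glue

variable (Λ) in
noncomputable def cutWitness (α : List A) : Tr V A → Tr V A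
  | .zero => .zero
  | .mk δ B _ => .mk (α ++ δ) (B ∩ Λ.rangeL (α ++ δ)) (α ++ δ)

/- `δ.drop α.length` and `α.drop δ.length` are what `δ` has beyond `α`, resp. lacks of `α`; for
comparable `δ` and `α` at most one of them is nonempty. -/
variable (Λ) in
noncomputable def glueWitness (α : List A) : Tr V A → Tr V A
  | .zero => .zero
  | .mk δ B _ => .mk (δ.drop α.length) (Λ.relRange B (α.drop δ.length)) (δ.drop α.length)

section Inverse

variable {ξ : Set (Tr V A)} {α : List A}

lemma IsFilterES.mem_Hcut_iff_cutWitness (hξ : Λ.IsFilterES ξ) (hLS : Λ.IsLS) (hα0 : α ≠ [])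
    {t : Tr V A} : t ∈ Λ.Hcut α ξ ↔
      (∃ δ B, t = Tr.mk δ B δ ∧ B ∈ Λ.Aset δ) ∧ Λ.cutWitness α t ∈ ξ := by
  constructor
  · intro ht
    obtain ⟨δ, B, rfl, -⟩ := (mem_Hcut_iff hα0).mp ht
    obtain ⟨hB, h⟩ := (hξ.mk_mem_Hcut_iff hLS hα0).mp ht
    exact ⟨⟨δ, B, rfl, hB⟩, h⟩
  · rintro ⟨⟨δ, B, rfl, hB⟩, h⟩
    exact (hξ.mk_mem_Hcut_iff hLS hα0).mpr ⟨hB, h⟩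

lemma IsFilterES.mem_Gglue_iff_glueWitness (hξ : Λ.IsFilterES ξ) (hLS : Λ.IsLS)
    (hα : α ∈ Λ.LStar) (hα0 : α ≠ []) (hrα : Tr.mk [] (Λ.rangeL α) [] ∈ ξ) {t : Tr V A} :
    t ∈ Λ.Gglue α ξ ↔ (∃ δ B, t = Tr.mk δ B δ ∧ (δ <+: α ∨ α <+: δ) ∧ B ∈ Λ.Aset δ) ∧
      Λ.glueWitness α t ∈ ξ := by
  constructor
  · intro ht
    obtain ⟨δ, B, rfl⟩ := exists_eq_mk_of_mem_Gglue hα0 ht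
    obtain ⟨hc, hB, h⟩ := (hξ.mk_mem_Gglue_iff hLS hα hα0 hrα).mp ht
    exact ⟨⟨δ, B, rfl, hc, hB⟩, h⟩
  · rintro ⟨⟨δ, B, rfl, hc, hB⟩, h⟩
    exact (hξ.mk_mem_Gglue_iff hLS hα hα0 hrα).mpr ⟨hc, hB, h⟩

lemma Hcut_mono (hα0 : α ≠ []) {η : Set (Tr V A)} (h : ξ ⊆ η) : Λ.Hcut α ξ ⊆ Λ.Hcut α η := by
  intro t ht
  obtain ⟨δ, B, rfl, hB, D, hD, hDB⟩ := (mem_Hcut_iff hα0).mp ht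
  exact (mem_Hcut_iff hα0).mpr ⟨δ, B, rfl, hB, D, h hD, hDB⟩

lemma Gglue_mono (hLS : Λ.IsLS) (hα : α ∈ Λ.LStar) (hα0 : α ≠ []) {η : Set (Tr V A)}
    (hξ : Λ.IsFilterES ξ) (hη : Λ.IsFilterES η) (hrα : Tr.mk [] (Λ.rangeL α) [] ∈ ξ)
    (h : ξ ⊆ η) : Λ.Gglue α ξ ⊆ Λ.Gglue α η := by
  intro t ht
  obtain ⟨hP, hw⟩ := (hξ.mem_Gglue_iff_glueWitness hLS hα hα0 hrα).mp ht
  exact (hη.mem_Gglue_iff_glueWitness hLS hα hα0 (h hrα)).mpr ⟨hP, h hw⟩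

lemma IsFilterES.Hcut_Gglue (hξ : Λ.IsFilterES ξ) (hW : Λ.IsWLR) (hα : α ∈ Λ.LStar)
    (hα0 : α ≠ []) (hrα : Tr.mk [] (Λ.rangeL α) [] ∈ ξ) : Λ.Hcut α (Λ.Gglue α ξ) = ξ := by
  have hLS := hW.toIsLS
  have hG := hξ.Gglue hW hα hα0 hrα
  ext t
  constructor
  · intro ht
    obtain ⟨δ, B, rfl, -⟩ := (mem_Hcut_iff hα0).mp ht
    obtain ⟨hB, h⟩ := (hG.mk_mem_Hcut_iff hLS hα0).mp ht
    obtain ⟨-, -, h⟩ := (hξ.mk_mem_Gglue_iff hLS hα hα0 hrα).mp h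
    rw [drop_left, drop_eq_nil_of_le (by simp), relRange_nil] at h
    exact hξ.mk_mem_of_subset h Set.inter_subset_left hB
  · intro ht
    obtain ⟨δ, B, rfl, -, hB, -⟩ := hξ.exists_eq_mk ht
    have h := hξ.mk_append_mem (δ := []) hrα ht
    rw [← rangeL_append] at h
    refine (hG.mk_mem_Hcut_iff hLS hα0).mpr ⟨hB, (hξ.mk_mem_Gglue_iff hLS hα hα0 hrα).mpr
      ⟨Or.inr (prefix_append α δ), ⟨(hξ.of_mk_mem h).2.1.1, Set.inter_subset_right⟩, ?_⟩⟩
    rwa [drop_left, drop_eq_nil_of_le (by simp), relRange_nil]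

lemma IsFilterES.mk_append_drop_mem (hξ : Λ.IsFilterES ξ) (hLS : Λ.IsLS) {D : Set V}
    (hD : Tr.mk α D α ∈ ξ) {δ : List A} {B : Set V} (hB : Tr.mk δ B δ ∈ ξ) :
    Tr.mk (δ ++ α.drop δ.length) (Λ.relRange B (α.drop δ.length))
      (δ ++ α.drop δ.length) ∈ ξ := by
  rcases hξ.prefix_or_prefix hB hD with ⟨ρ, rfl⟩ | hαδ
  · obtain ⟨hδρ, -⟩ := hξ.of_mk_mem hD
    obtain ⟨-, hBA, -⟩ := hξ.of_mk_mem hB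
    rw [drop_left]
    refine hξ.mk_mem_of_subset (hξ.mk_append_mem hB hD) Set.inter_subset_right
      ⟨hLS.relRange_mem B hBA.1 ρ (Λ.mem_LStar_of_suffix hδρ (suffix_append δ ρ)), ?_⟩
    rw [rangeL_append]
    exact Λ.relRange_mono hBA.2 ρ
  · simpa [drop_eq_nil_of_le hαδ.length_le] using hB

lemma IsFilterES.Gglue_Hcut (hξ : Λ.IsFilterES ξ) (hW : Λ.IsWLR) (hα0 : α ≠ []) {D : Set V}
    (hD : Tr.mk α D α ∈ ξ) : Λ.Gglue α (Λ.Hcut α ξ) = ξ := by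
  have hLS := hW.toIsLS
  have hα := (hξ.of_mk_mem hD).1
  have hH := hξ.Hcut hW hα0 hD
  have hrα := hξ.mk_rangeL_mem_Hcut hLS hα0 hD
  ext t
  constructor
  · intro ht
    obtain ⟨δ, B, rfl⟩ := exists_eq_mk_of_mem_Gglue hα0 ht
    obtain ⟨hc, hB, h⟩ := (hH.mk_mem_Gglue_iff hLS hα hα0 hrα).mp ht
    obtain ⟨-, h⟩ := (hξ.mk_mem_Hcut_iff hLS hα0).mp h
    rw [Set.inter_eq_left.mpr (Λ.relRange_drop_subset_rangeL hc hB.2),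
      append_drop_eq_append_drop hc] at h
    exact hξ.mk_mem_of_append h subset_rfl hB
  · intro ht
    obtain ⟨δ, B, rfl, -, hB, -⟩ := hξ.exists_eq_mk ht
    have hc := hξ.prefix_or_prefix ht hD
    refine (hH.mk_mem_Gglue_iff hLS hα hα0 hrα).mpr ⟨hc, hB, (hξ.mk_mem_Hcut_iff hLS hα0).mpr
      ⟨⟨hLS.relRange_mem B hB.1 _ (Λ.drop_mem_LStar hα _),
        (Λ.relRange_drop_subset_rangeL hc hB.2).trans (Λ.rangeL_append_subset _ _)⟩, ?_⟩⟩
    rw [Set.inter_eq_left.mpr (Λ.relRange_drop_subset_rangeL hc hB.2),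
      append_drop_eq_append_drop hc]
    exact hξ.mk_append_drop_mem hLS hD ht

end Inverse

/-! ### Ultrafilters, tight filters and words -/

section Tight

variable {α : List A}

lemma IsUltraES.Gglue {ζ : Set (Tr V A)} (hζ : Λ.IsUltraES ζ) (hW : Λ.IsWLR) (hα : α ∈ Λ.LStar)
    (hα0 : α ≠ []) (hrα : Tr.mk [] (Λ.rangeL α) [] ∈ ζ) : Λ.IsUltraES (Λ.Gglue α ζ) :=
  hζ.map (hζ.1.Gglue hW hα hα0 hrα) (hζ.1.Hcut_Gglue hW hα hα0 hrα) fun _ hη hζη =>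
    have hD := hζη (hζ.1.mk_rangeL_mem_Gglue hW.toIsLS hα hα0 hrα)
    ⟨hη.Hcut hW hα0 hD, Hcut_mono hα0 hζη, hη.Gglue_Hcut hW hα0 hD⟩

lemma IsUltraES.Hcut {ξ : Set (Tr V A)} (hξ : Λ.IsUltraES ξ) (hW : Λ.IsWLR) (hα0 : α ≠ [])
    {D : Set V} (hD : Tr.mk α D α ∈ ξ) : Λ.IsUltraES (Λ.Hcut α ξ) := by
  have hα := (hξ.1.of_mk_mem hD).1
  have hrα := hξ.1.mk_rangeL_mem_Hcut hW.toIsLS hα0 hD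
  refine hξ.map (hξ.1.Hcut hW hα0 hD) (hξ.1.Gglue_Hcut hW hα0 hD) fun η hη hξη => ?_
  have hrαη := hξη hrα
  exact ⟨hη.Gglue hW hα hα0 hrαη,
    Gglue_mono hW.toIsLS hα hα0 (hξ.1.Hcut hW hα0 hD) hη hrα hξη, hη.Hcut_Gglue hW hα hα0 hrαη⟩

lemma IsTightFilter.Gglue {ξ : Set (Tr V A)} (hξ : Λ.IsTightFilter ξ) (hW : Λ.IsWLR)
    (hα : α ∈ Λ.LStar) (hα0 : α ≠ []) (hrα : Tr.mk [] (Λ.rangeL α) [] ∈ ξ) :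
    Λ.IsTightFilter (Λ.Gglue α ξ) :=
  hξ.map_of_mem_iff (fun _ hζ hrα _ => hζ.mem_Gglue_iff_glueWitness hW.toIsLS hα hα0 hrα)
    (fun _ hζ hrα => hζ.Gglue hW hα hα0 hrα) (fun _ hζ hrα => hζ.Gglue hW hα hα0 hrα) hrα

lemma IsTightFilter.Hcut {ξ : Set (Tr V A)} (hξ : Λ.IsTightFilter ξ) (hW : Λ.IsWLR)
    (hα0 : α ≠ []) {D : Set V} (hD : Tr.mk α D α ∈ ξ) : Λ.IsTightFilter (Λ.Hcut α ξ) :=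
  hξ.map_of_mem_iff (fun _ hζ _ _ => hζ.mem_Hcut_iff_cutWitness hW.toIsLS hα0)
    (fun _ hζ hD => hζ.Hcut hW hα0 hD) (fun _ hζ hD => hζ.Hcut hW hα0 hD) hD

end Tight

section HasWord

variable {ξ : Set (Tr V A)} {α : List A} {β : Word A}

lemma HasWord.exists_mk_mem (hα0 : α ≠ []) (hwd : Λ.HasWord ξ (wappend α β)) :
    ∃ D, Tr.mk α D α ∈ ξ :=
  (hwd α hα0).mpr (wprefix_wappend_iff.mpr (Or.inl (prefix_refl α)))

lemma IsFilterES.hasWord_Gglue (hξ : Λ.IsFilterES ξ) (hLS : Λ.IsLS) (hα : α ∈ Λ.LStar)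
    (hα0 : α ≠ []) (hrα : Tr.mk [] (Λ.rangeL α) [] ∈ ξ) (hwd : Λ.HasWord ξ β) :
    Λ.HasWord (Λ.Gglue α ξ) (wappend α β) := by
  have hmk := fun {δ : List A} {B : Set V} => hξ.mk_mem_Gglue_iff hLS hα hα0 hrα (δ := δ) (B := B)
  have hpre : ∀ γ, γ ≠ [] → γ <+: α → ∃ B, Tr.mk γ B γ ∈ Λ.Gglue α ξ := fun γ hγ0 hγα =>
    ⟨_, hmk.mpr ⟨Or.inl hγα, ⟨hLS.range_mem γ (Λ.mem_LStar_of_prefix hα hγα) hγ0, subset_rfl⟩,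
      by rwa [drop_eq_nil_of_le hγα.length_le, ← rangeL_append, prefix_iff_eq_append.mp hγα]⟩⟩
  intro γ hγ0
  rw [wprefix_wappend_iff]
  constructor
  · rintro ⟨B, hB⟩
    obtain ⟨hγα | ⟨ρ, rfl⟩, -, h⟩ := hmk.mp hB
    · exact Or.inl hγα
    rcases eq_or_ne ρ [] with rfl | hρ
    · exact Or.inl (by simp)
    · rw [drop_left] at h ⊢
      exact Or.inr ⟨prefix_append α ρ, (hwd ρ hρ).mp ⟨_, h⟩⟩
  · rintro (hγα | ⟨⟨ρ, rfl⟩, hρβ⟩)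
    · exact hpre γ hγ0 hγα
    rcases eq_or_ne ρ [] with rfl | hρ
    · exact hpre _ hγ0 (by simp)
    rw [drop_left] at hρβ
    obtain ⟨B, hB⟩ := (hwd ρ hρ).mpr hρβ
    have h := hξ.mk_append_mem (δ := []) hrα hB
    rw [← rangeL_append] at h
    exact ⟨_, hmk.mpr ⟨Or.inr (prefix_append α ρ), ⟨(hξ.of_mk_mem h).2.1.1, Set.inter_subset_right⟩,
      by simpa [drop_eq_nil_of_le] using h⟩⟩

lemma IsFilterES.hasWord_Hcut (hξ : Λ.IsFilterES ξ) (hLS : Λ.IsLS) (hα0 : α ≠ [])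
    (hwd : Λ.HasWord ξ (wappend α β)) : Λ.HasWord (Λ.Hcut α ξ) β := by
  intro γ hγ0
  have hαγ0 : α ++ γ ≠ [] := append_ne_nil_of_left_ne_nil hα0 γ
  constructor
  · rintro ⟨B, hB⟩
    obtain ⟨-, h⟩ := (hξ.mk_mem_Hcut_iff hLS hα0).mp hB
    rcases wprefix_wappend_iff.mp ((hwd _ hαγ0).mp ⟨_, h⟩) with h' | ⟨-, h'⟩
    · exact absurd (by simpa using h'.length_le) hγ0
    · rwa [drop_left] at h'
  · intro hγβ
    obtain ⟨D, hD⟩ := (hwd _ hαγ0).mpr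
      (wprefix_wappend_iff.mpr (Or.inr ⟨prefix_append α γ, by rwa [drop_left]⟩))
    obtain ⟨hαγ, hDA, -⟩ := hξ.of_mk_mem hD
    have hγ := hLS.range_mem γ (Λ.mem_LStar_of_suffix hαγ (suffix_append α γ)) hγ0
    exact ⟨_, (hξ.mk_mem_Hcut_iff hLS hα0).mpr ⟨⟨hγ, subset_rfl⟩, hξ.mk_mem_of_subset hD
      (Set.subset_inter (hDA.2.trans (Λ.rangeL_append_subset α γ)) hDA.2)
      (hLS.inter_rangeL_mem_Aset hγ hαγ hαγ0)⟩⟩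

end HasWord

end LblSp

namespace LblSp

variable {V : Type u} {Ed : Type v} {A : Type w} (Λ : LblSp V Ed A)

theorem statement_18 (hΛ : Λ.IsNormal) (α : List A) (hα : α ∈ Λ.LStar) (hα0 : α ≠ [])
    (β : Word A) :
    Set.MapsTo (Λ.Gglue α) (Λ.TGlueDom α β) (Λ.TWord (wappend α β)) ∧
    Set.MapsTo (Λ.Hcut α) (Λ.TWord (wappend α β)) (Λ.TGlueDom α β) ∧
    (∀ ξ ∈ Λ.TGlueDom α β, Λ.Hcut α (Λ.Gglue α ξ) = ξ) ∧
    (∀ ξ ∈ Λ.TWord (wappend α β), Λ.Gglue α (Λ.Hcut α ξ) = ξ) := by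
  have hW := hΛ.toIsWLR
  refine ⟨fun ξ ⟨hξ, hwd, hrα⟩ => ?_, fun ξ ⟨hξ, hwd⟩ => ?_, fun ξ ⟨hξ, _, hrα⟩ => ?_,
    fun ξ ⟨hξ, hwd⟩ => ?_⟩
  · exact ⟨hξ.Gglue hW hα hα0 (hrα hα0),
      hξ.1.hasWord_Gglue hW.toIsLS hα hα0 (hrα hα0) hwd⟩
  · obtain ⟨D, hD⟩ := hwd.exists_mk_mem hα0
    exact ⟨hξ.Hcut hW hα0 hD, hξ.1.hasWord_Hcut hW.toIsLS hα0 hwd,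
      fun _ => hξ.1.mk_rangeL_mem_Hcut hW.toIsLS hα0 hD⟩
  · exact hξ.1.Hcut_Gglue hW hα hα0 (hrα hα0)
  · obtain ⟨D, hD⟩ := hwd.exists_mk_mem hα0
    exact hξ.1.Gglue_Hcut hW hα0 hD

end LblSp
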